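/- Let K be a compact metric space, let ρ be a finite nonnegative Borel measure on K, and let v : K → ℝ^d be a Borel measurable vector field with ∫_K |v|² dρ < ∞. Let m be the ℝ^d-valued vector measure with density v with respect to ρ, i.e. m(A) = ∫_A v dρ for Borel sets A. Then B₂(ρ, m) = (1/2) ∫_K |v|² dρ. -/

import Mathlib

/-!
Writing `m_i = ρ.withDensity v_i⁺ - ρ.withDensity v_i⁻` (a Jordan decomposition, since the two
parts are mutually singular) identifies `∫ b · dm` with `∫ ⟪v, b⟫ dρ`. For admissible `(a, b)`,
`a ≤ -|b|²/2` and `-|b|²/2 + ⟪v, b⟫ = |v|²/2 - |v - b|²/2` give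
`∫ a dρ + ∫ b · dm ≤ ½ ∫ |v|² dρ - ½ ∫ |v - b|² dρ`, with equality for `a = -|b|²/2`.
Continuous functions are dense in `L²(ρ)`, so the defect `½ ∫ |v - b|² dρ` can be made arbitrarily
small.
-/

open Filter MeasureTheory Topology

/-- The integral of a function against a finite signed measure, defined via the
Jordan decomposition: `∫ f dμ = ∫ f dμ⁺ − ∫ f dμ⁻`. -/
noncomputable def sintegral {K : Type*} [MeasurableSpace K]
    (μ : MeasureTheory.SignedMeasure K) (f : K → ℝ) : ℝ :=
  (∫ x, f x ∂μ.toJordanDecomposition.posPart) -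
    (∫ x, f x ∂μ.toJordanDecomposition.negPart)

/-- The Benamou–Brenier functional
`B₂(ρ, m) = sup { ∫ a dρ + ∫ b · dm : a, b continuous, a(x) + |b(x)|²/2 ≤ 0 ∀x }`,
where the `ℝ^d`-valued vector measure `m` is given through its `d` signed-measure
components and the supremum is taken in `ℝ ∪ {+∞}`. -/
noncomputable def BB2 {K : Type*} [TopologicalSpace K] [MeasurableSpace K] (d : ℕ)
    (ρ : MeasureTheory.SignedMeasure K) (m : Fin d → MeasureTheory.SignedMeasure K) : EReal :=
  ⨆ ab : {ab : C(K, ℝ) × C(K, EuclideanSpace ℝ (Fin d)) //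
      ∀ x : K, ab.1 x + ‖ab.2 x‖ ^ 2 / 2 ≤ 0},
    ((sintegral ρ (ab : C(K, ℝ) × C(K, EuclideanSpace ℝ (Fin d))).1 +
        ∑ i : Fin d, sintegral (m i)
          (fun x => (ab : C(K, ℝ) × C(K, EuclideanSpace ℝ (Fin d))).2 x i) : ℝ) : EReal)

open scoped RealInnerProductSpace

section SignedIntegral

variable {α : Type*} [MeasurableSpace α]

lemma sintegral_toSignedMeasure (μ : Measure α) [IsFiniteMeasure μ] (f : α → ℝ) :
    sintegral μ.toSignedMeasure f = ∫ x, f x ∂μ := by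
  have hj : μ.toSignedMeasure.toJordanDecomposition =
      ⟨μ, 0, Measure.MutuallySingular.zero_right⟩ :=
    SignedMeasure.toJordanDecomposition_eq (by simp [JordanDecomposition.toSignedMeasure])
  simp [sintegral, hj]

lemma integral_withDensity_ofReal (μ : Measure α) {h : α → ℝ} (hh : Measurable h) (f : α → ℝ) :
    ∫ x, f x ∂μ.withDensity (fun x => ENNReal.ofReal (h x)) = ∫ x, max (h x) 0 * f x ∂μ := by
  have e := integral_withDensity_eq_integral_smul (μ := μ) hh.real_toNNReal f
  simp only [NNReal.smul_def, Real.coe_toNNReal', smul_eq_mul] at e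
  exact e

lemma MeasureTheory.Integrable.max_zero_mul {μ : Measure α} {h f : α → ℝ} (hh : Measurable h)
    (hfh : Integrable (fun x => f x * h x) μ) : Integrable (fun x => max (h x) 0 * f x) μ := by
  have e : (fun x => max (h x) 0 * f x) = {x | 0 ≤ h x}.indicator fun x => f x * h x := by
    funext x
    by_cases hx : 0 ≤ h x <;> simp [Set.indicator, hx, le_of_not_ge, mul_comm]
  rw [e]
  exact hfh.indicator (measurableSet_le measurable_const hh)

lemma sintegral_withDensityᵥ {μ : Measure α} {g : α → ℝ} (hg : Measurable g)
    (hgi : Integrable g μ) {f : α → ℝ} (hfg : Integrable (fun x => f x * g x) μ) :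
    sintegral (μ.withDensityᵥ g) f = ∫ x, f x * g x ∂μ := by
  have := isFiniteMeasure_withDensity_ofReal hgi.2
  have := isFiniteMeasure_withDensity_ofReal hgi.neg.2
  have hj : SignedMeasure.toJordanDecomposition (μ.withDensityᵥ g) =
      (⟨μ.withDensity fun x => ENNReal.ofReal (g x), μ.withDensity fun x => ENNReal.ofReal (-g x),
        withDensity_ofReal_mutuallySingular hg⟩ : JordanDecomposition α) :=
    SignedMeasure.toJordanDecomposition_eq
      (withDensityᵥ_eq_withDensity_pos_part_sub_withDensity_neg_part hgi)
  have hfg_neg : Integrable (fun x => f x * -g x) μ := by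
    simp_rw [mul_neg]; exact hfg.neg
  rw [sintegral, hj, integral_withDensity_ofReal μ hg,
    integral_withDensity_ofReal μ (h := fun x => -g x) hg.neg,
    ← integral_sub (hfg.max_zero_mul hg) (hfg_neg.max_zero_mul (h := fun x => -g x) hg.neg)]
  congr 1 with x
  linear_combination f x * max_zero_sub_max_neg_zero_eq_self (g x)

end SignedIntegral

section InnerProduct

variable {α : Type*} [MeasurableSpace α] {μ : Measure α}
  {E : Type*} [NormedAddCommGroup E] [InnerProductSpace ℝ E]

lemma MeasureTheory.MemLp.integrable_inner {v b : α → E} (hv : MemLp v 2 μ) (hb : MemLp b 2 μ) :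
    Integrable (fun x => ⟪v x, b x⟫) μ := by
  have e : (fun x => ⟪v x, b x⟫) =
      fun x => (‖v x‖ ^ 2 + ‖b x‖ ^ 2 - ‖v x - b x‖ ^ 2) / 2 := by
    funext x
    rw [norm_sub_sq_real]
    ring
  rw [e]
  exact (((hv.integrable_norm_pow two_ne_zero).add (hb.integrable_norm_pow two_ne_zero)).sub
    ((hv.sub hb).integrable_norm_pow two_ne_zero)).div_const 2

lemma integral_neg_half_norm_sq_add_integral_inner {v b : α → E} (hv : MemLp v 2 μ)
    (hb : MemLp b 2 μ) :
    (∫ x, -(‖b x‖ ^ 2 / 2) ∂μ) + ∫ x, ⟪v x, b x⟫ ∂μ =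
      (1 / 2) * (∫ x, ‖v x‖ ^ 2 ∂μ) - (1 / 2) * ∫ x, ‖v x - b x‖ ^ 2 ∂μ := by
  have hb2 : Integrable (fun x => -(‖b x‖ ^ 2 / 2)) μ :=
    ((hb.integrable_norm_pow two_ne_zero).div_const 2).neg
  have hvb2 : Integrable (fun x => ‖v x - b x‖ ^ 2) μ :=
    (hv.sub hb).integrable_norm_pow two_ne_zero
  calc (∫ x, -(‖b x‖ ^ 2 / 2) ∂μ) + ∫ x, ⟪v x, b x⟫ ∂μ
      = ∫ x, -(‖b x‖ ^ 2 / 2) + ⟪v x, b x⟫ ∂μ := (integral_add hb2 (hv.integrable_inner hb)).symm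
    _ = ∫ x, (1 / 2) * ‖v x‖ ^ 2 - (1 / 2) * ‖v x - b x‖ ^ 2 ∂μ := by
      congr 1 with x
      rw [norm_sub_sq_real]
      ring
    _ = _ := by
      rw [integral_sub ((hv.integrable_norm_pow two_ne_zero).const_mul _) (hvb2.const_mul _),
        integral_const_mul, integral_const_mul]

lemma integral_add_integral_inner_le {a : α → ℝ} {v b : α → E} (ha : Integrable a μ)
    (hv : MemLp v 2 μ) (hb : MemLp b 2 μ) (hab : ∀ x, a x + ‖b x‖ ^ 2 / 2 ≤ 0) :
    (∫ x, a x ∂μ) + ∫ x, ⟪v x, b x⟫ ∂μ ≤ (1 / 2) * ∫ x, ‖v x‖ ^ 2 ∂μ := by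
  have ha_le : ∫ x, a x ∂μ ≤ ∫ x, -(‖b x‖ ^ 2 / 2) ∂μ :=
    integral_mono ha ((hb.integrable_norm_pow two_ne_zero).div_const 2).neg
      fun x => by linarith [hab x]
  have hdist : 0 ≤ ∫ x, ‖v x - b x‖ ^ 2 ∂μ := integral_nonneg fun x => by positivity
  linarith [integral_neg_half_norm_sq_add_integral_inner hv hb]

end InnerProduct

lemma sum_sintegral_withDensityᵥ_eq_integral_inner {α ι : Type*} [MeasurableSpace α] [Fintype ι]
    {μ : Measure α} [IsFiniteMeasure μ] {v b : α → EuclideanSpace ℝ ι} (hv : Measurable v)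
    (hv2 : MemLp v 2 μ) (hb2 : MemLp b 2 μ) :
    ∑ i, sintegral (μ.withDensityᵥ fun x => v x i) (fun x => b x i) = ∫ x, ⟪v x, b x⟫ ∂μ := by
  have hcoord : ∀ {w : α → EuclideanSpace ℝ ι}, MemLp w 2 μ → ∀ i, MemLp (fun x => w x i) 2 μ :=
    fun hw i => by
      simpa using hw.continuousLinearMap_comp (EuclideanSpace.proj i : EuclideanSpace ℝ ι →L[ℝ] ℝ)
  have hprod : ∀ i, Integrable (fun x => b x i * v x i) μ :=
    fun i => (hcoord hb2 i).integrable_mul (hcoord hv2 i)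
  rw [Finset.sum_congr rfl fun i _ => sintegral_withDensityᵥ (by fun_prop)
    ((hcoord hv2 i).integrable one_le_two) (hprod i), ← integral_finsetSum _ fun i _ => hprod i]
  simp only [PiLp.inner_apply, Real.inner_apply, mul_comm]

lemma EReal.iSup_coe_eq_of_forall_le_of_forall_sub_lt {ι : Sort*} {f : ι → ℝ} {c : ℝ}
    (hle : ∀ i, f i ≤ c) (hlt : ∀ ε > 0, ∃ i, c - ε < f i) : ⨆ i, (f i : EReal) = c := by
  refine iSup_eq_of_forall_le_of_forall_lt_exists_gt (fun i => EReal.coe_le_coe_iff.2 (hle i))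
    fun w hw => ?_
  obtain ⟨r, hwr, hrc⟩ := EReal.exists_between_coe_real hw
  obtain ⟨i, hi⟩ := hlt (c - r) (by simpa using EReal.coe_lt_coe_iff.1 hrc)
  exact ⟨i, hwr.trans (EReal.coe_lt_coe_iff.2 (by linarith))⟩

/-- If `ρ` is a finite nonnegative Borel measure on a compact metric space, `v` is a
Borel vector field with `∫ |v|² dρ < ∞`, and `m` is the vector measure with density
`v` with respect to `ρ`, then `B₂(ρ, m) = (1/2) ∫ |v|² dρ`. -/
theorem stmt5 {K : Type*} [MetricSpace K] [CompactSpace K]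
    [MeasurableSpace K] [BorelSpace K] (d : ℕ)
    (ρ : Measure K) [IsFiniteMeasure ρ]
    (v : K → EuclideanSpace ℝ (Fin d)) (hv : Measurable v)
    (hint : Integrable (fun x => ‖v x‖ ^ 2) ρ) :
    BB2 d ρ.toSignedMeasure (fun i => ρ.withDensityᵥ (fun x => v x i)) =
      (((1 / 2) * ∫ x, ‖v x‖ ^ 2 ∂ρ : ℝ) : EReal) := by
  have hv2 : MemLp v 2 ρ := (memLp_two_iff_integrable_sq_norm hv.aestronglyMeasurable).2 hint
  have hb2 : ∀ b : C(K, EuclideanSpace ℝ (Fin d)), MemLp b 2 ρ := fun b => b.memLp ρ ℝ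
  rw [BB2]
  refine (iSup_congr fun ab => ?_).trans
    (EReal.iSup_coe_eq_of_forall_le_of_forall_sub_lt (fun ab => integral_add_integral_inner_le
      (memLp_one_iff_integrable.1 (ab.1.1.memLp ρ ℝ)) hv2 (hb2 _) ab.2) fun ε hε => ?_)
  · rw [sintegral_toSignedMeasure, sum_sintegral_withDensityᵥ_eq_integral_inner hv hv2 (hb2 _)]
  obtain ⟨b, hb, -⟩ := MemLp.exists_boundedContinuous_integral_rpow_sub_le two_pos
    (by rwa [ENNReal.ofReal_ofNat]) hε
  simp only [Real.rpow_two] at hb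
  refine ⟨⟨(⟨fun x => -(‖b x‖ ^ 2 / 2), by fun_prop⟩, b.toContinuousMap), fun x => by simp⟩, ?_⟩
  have hdist := integral_neg_half_norm_sq_add_integral_inner hv2 (hb2 b.toContinuousMap)
  simp only [ContinuousMap.coe_mk, BoundedContinuousFunction.coe_toContinuousMap] at hdist ⊢
  linarith
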